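/- arXiv:1501.06048 — 3 statements merged into one kernel-verified Lean document; each statement's English description precedes it below -/
import Mathlib

section
/- Let p be an odd prime and F a field of characteristic p. The Specht modules S^{(p−j,1^j)} for F𝔖_p, j = 0, 1, …, p−1 (hook partitions), are pairwise non-isomorphic. -/
theorem replicate_one_sorted (j : ℕ) : List.Pairwise (· ≥ ·) (List.replicate j 1) := by
  induction j with
  | zero => simp
  | succ n ih =>
    rw [List.replicate_succ]
    refine List.pairwise_cons.mpr ⟨?_, ih⟩
    intro b hb
    rw [List.eq_of_mem_replicate hb]

/-- The hook Young diagram `(n - j, 1^j)` with `n` cells. -/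
def hookDiagram (n j : ℕ) (h : j < n) : YoungDiagram :=
  YoungDiagram.ofRowLens ((n - j) :: List.replicate j 1) (by
    refine List.sortedGE_iff_pairwise.mpr (List.pairwise_cons.mpr ⟨?_, replicate_one_sorted j⟩)
    intro b hb
    rw [List.eq_of_mem_replicate hb]
    omega)

/-- The row symmetrizer `a_T = Σ_{σ ∈ rowStab(T)} σ` of a tableau `T` of shape `μ`. -/
noncomputable def rowSymmetrizer (F : Type) [Field F] (n : ℕ) (μ : YoungDiagram)
    (T : Fin n ≃ ↥μ.cells) : MonoidAlgebra F (Equiv.Perm (Fin n)) :=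
  ∑ σ ∈ Finset.univ.filter
      (fun σ : Equiv.Perm (Fin n) => ∀ i, ((T (σ i)) : ℕ × ℕ).1 = ((T i) : ℕ × ℕ).1),
    MonoidAlgebra.of F (Equiv.Perm (Fin n)) σ

/-- The column antisymmetrizer `b_T = Σ_{σ ∈ colStab(T)} sign(σ) σ`. -/
noncomputable def colSymmetrizer (F : Type) [Field F] (n : ℕ) (μ : YoungDiagram)
    (T : Fin n ≃ ↥μ.cells) : MonoidAlgebra F (Equiv.Perm (Fin n)) :=
  ∑ σ ∈ Finset.univ.filter
      (fun σ : Equiv.Perm (Fin n) => ∀ i, ((T (σ i)) : ℕ × ℕ).2 = ((T i) : ℕ × ℕ).2),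
    ((Equiv.Perm.sign σ : ℤ) : F) • MonoidAlgebra.of F (Equiv.Perm (Fin n)) σ

/-- The Specht module `S^μ`, realized as the left ideal of the group algebra generated by
the Young symmetrizer `b_T a_T` of a `μ`-tableau `T`. -/
noncomputable def spechtModule (F : Type) [Field F] (n : ℕ) (μ : YoungDiagram)
    (T : Fin n ≃ ↥μ.cells) :
    Submodule (MonoidAlgebra F (Equiv.Perm (Fin n))) (MonoidAlgebra F (Equiv.Perm (Fin n))) :=
  Submodule.span _ {colSymmetrizer F n μ T * rowSymmetrizer F n μ T}

/-- The dual Specht module `S_μ = (S^μ)*`, as a module over the group algebra via the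
contragredient action. -/
noncomputable def dualSpechtModule (F : Type) [Field F] (n : ℕ) (μ : YoungDiagram)
    (T : Fin n ≃ ↥μ.cells) : Type :=
  (Representation.dual (Representation.ofModule' (k := F) (G := Equiv.Perm (Fin n))
    ↥(spechtModule F n μ T))).asModule

noncomputable instance (F : Type) [Field F] (n : ℕ) (μ : YoungDiagram) (T : Fin n ≃ ↥μ.cells) :
    AddCommMonoid (dualSpechtModule F n μ T) := by
  unfold dualSpechtModule; infer_instance

noncomputable instance (F : Type) [Field F] (n : ℕ) (μ : YoungDiagram) (T : Fin n ≃ ↥μ.cells) :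
    Module (MonoidAlgebra F (Equiv.Perm (Fin n))) (dualSpechtModule F n μ T) := by
  unfold dualSpechtModule; infer_instance

/-! By symmetry let `l < j`, so `(p-l, 1^l)` has `l + 1` rows and a first row of length `≥ 2`.
If `j < p - 1`, let `z` be the antisymmetrizer of `l + 2` entries in the first column of the
`j`-tableau. It acts on the generator `b_T a_T` of `S^{(p-j,1^j)}` by the scalar `(l + 2)!`, a unit
in characteristic `p`, but kills `S^{(p-l,1^l)}`: for every `h`, two of those entries are sent by
`h⁻¹` into one row, so their transposition `t` fixes `h a_T` from the left while `z t = -z`.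
If `j = p - 1`, `S^{(1^p)}` is the sign representation. A left sign-isotypic element of the group
algebra is also right sign-isotypic, whereas every element of `S^{(p-l,1^l)}` is fixed on the right
by a transposition of its first row; as `2 ≠ 0`, no nonzero element of it is sign-isotypic. -/

open Finset MonoidAlgebra Equiv

section GroupAlgebra

variable {F G : Type*} [CommRing F] [Group G]

theorem Int.cast_units_mul_self (u : ℤˣ) : ((u : ℤ) : F) * (u : ℤ) = 1 := by
  rw [← Int.cast_mul, ← Units.val_mul, Int.units_mul_self, Units.val_one, Int.cast_one]

theorem of_mul_sum_units_smul_of {χ : G →* ℤˣ} {s : Finset G} {τ : G}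
    (hs : ∀ σ, τ * σ ∈ s ↔ σ ∈ s) :
    of F G τ * ∑ σ ∈ s, ((χ σ : ℤ) : F) • of F G σ
      = ((χ τ : ℤ) : F) • ∑ σ ∈ s, ((χ σ : ℤ) : F) • of F G σ := by
  rw [mul_sum, smul_sum]
  refine sum_equiv (Equiv.mulLeft τ) (fun σ => (hs σ).symm) fun σ _ => ?_
  simp only [coe_mulLeft, map_mul, mul_smul_comm, smul_smul, Units.val_mul, Int.cast_mul,
    ← mul_assoc, Int.cast_units_mul_self, one_mul]

theorem sum_units_smul_of_mul_of {χ : G →* ℤˣ} {s : Finset G} {τ : G}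
    (hs : ∀ σ, σ * τ ∈ s ↔ σ ∈ s) :
    (∑ σ ∈ s, ((χ σ : ℤ) : F) • of F G σ) * of F G τ
      = ((χ τ : ℤ) : F) • ∑ σ ∈ s, ((χ σ : ℤ) : F) • of F G σ := by
  rw [sum_mul, smul_sum]
  refine sum_equiv (Equiv.mulRight τ) (fun σ => (hs σ).symm) fun σ _ => ?_
  simp only [coe_mulRight, map_mul, smul_mul_assoc, smul_smul, Units.val_mul, Int.cast_mul,
    mul_left_comm _ ((χ σ : ℤ) : F), Int.cast_units_mul_self, mul_one]

/-- Left `χ`-isotypic elements of the group algebra are multiples of `∑ χ(g) g`, hence also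
right `χ`-isotypic. -/
theorem mul_of_eq_units_smul {χ : G →* ℤˣ} {m : MonoidAlgebra F G}
    (hm : ∀ g, of F G g * m = ((χ g : ℤ) : F) • m) (g : G) :
    m * of F G g = ((χ g : ℤ) : F) • m := by
  have hcoeff : ∀ h, m.coeff h = ((χ h : ℤ) : F) * m.coeff 1 := by
    intro h
    have := congrArg (·.coeff h) (hm h)
    simp only [of_apply, coeff_single_mul_apply, inv_mul_cancel, one_mul, coeff_smul,
      Finsupp.smul_apply, smul_eq_mul] at this
    rw [this, ← mul_assoc, Int.cast_units_mul_self, one_mul]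
  ext h
  rw [of_apply, coeff_mul_single_apply, mul_one, coeff_smul, Finsupp.smul_apply, smul_eq_mul,
    hcoeff, hcoeff h, map_mul, map_inv, Int.units_inv_eq_self]
  push_cast
  ring

end GroupAlgebra

theorem eq_zero_of_eq_neg {K M : Type*} [Field K] [AddCommGroup M] [Module K M]
    (h2 : (2 : K) ≠ 0) {v : M} (h : v = -v) : v = 0 := by
  have h2v : (2 : K) • v = 0 := by
    rw [two_smul]
    nth_rewrite 1 [h]
    exact neg_add_cancel v
  exact (smul_eq_zero.1 h2v).resolve_left h2

namespace Equiv.Perm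

variable {α β : Type*}

theorem forall_apply_mul_left_iff {f : α → β} {τ : Perm α} (hτ : ∀ i, f (τ i) = f i)
    (σ : Perm α) : (∀ i, f ((τ * σ) i) = f i) ↔ ∀ i, f (σ i) = f i := by
  simp only [mul_apply, hτ]

theorem forall_apply_mul_right_iff {f : α → β} {τ : Perm α} (hτ : ∀ i, f (τ i) = f i)
    (σ : Perm α) : (∀ i, f ((σ * τ) i) = f i) ↔ ∀ i, f (σ i) = f i := by
  refine ⟨fun h i => ?_, fun h i => by rw [mul_apply, h, hτ]⟩
  have hτi := hτ (τ⁻¹ i)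
  have hσi := h (τ⁻¹ i)
  simp only [coe_inv, mul_apply, apply_symm_apply] at hτi hσi
  rw [hσi, ← hτi]

theorem apply_swap_apply_eq [DecidableEq α] {f : α → β} {a b : α} (h : f a = f b) (i : α) :
    f (swap a b i) = f i := by
  rw [swap_apply_def]
  split_ifs with ha hb
  · rw [ha, h]
  · rw [hb, h]
  · rfl

theorem apply_mem_of_forall_notMem_apply_eq {X : Finset α} {σ : Perm α}
    (hσ : ∀ i ∉ X, σ i = i) {i : α} (hi : i ∈ X) : σ i ∈ X := by
  by_contra h
  rw [σ.injective (hσ (σ i) h)] at h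
  exact h hi

end Equiv.Perm

section Antisymmetrizer

variable (F : Type*) [CommRing F] {α : Type*} [Fintype α] [DecidableEq α]

noncomputable def antisymmetrizer (X : Finset α) : MonoidAlgebra F (Perm α) :=
  ∑ σ ∈ univ.filter (fun σ : Perm α => ∀ i ∉ X, σ i = i),
    ((Perm.sign σ : ℤ) : F) • of F _ σ

variable {F}

theorem card_filter_forall_notMem_apply_eq (X : Finset α) :
    #(univ.filter fun σ : Perm α => ∀ i ∉ X, σ i = i) = (#X).factorial := by
  rw [← Fintype.card_subtype, ← Fintype.card_congr (Perm.subtypeEquivSubtypePerm (· ∈ X)),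
    Fintype.card_perm, Fintype.card_coe]

theorem antisymmetrizer_mul_swap {X : Finset α} {x y : α} (hx : x ∈ X) (hy : y ∈ X)
    (hxy : x ≠ y) : antisymmetrizer F X * of F _ (swap x y) = -antisymmetrizer F X := by
  have hfix : ∀ i ∉ X, swap x y i = i := fun i hi =>
    swap_apply_of_ne_of_ne (by rintro rfl; exact hi hx) (by rintro rfl; exact hi hy)
  rw [antisymmetrizer, sum_units_smul_of_mul_of fun σ => ?_, Perm.sign_swap hxy]
  · simp
  · simp only [mem_filter, mem_univ, true_and, Perm.mul_apply]
    exact forall₂_congr fun i hi => by rw [hfix i hi]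

end Antisymmetrizer

namespace YoungDiagram

theorem fst_lt_colLen_zero (μ : YoungDiagram) {c : ℕ × ℕ} (hc : c ∈ μ.cells) :
    c.1 < μ.colLen 0 :=
  (mem_iff_lt_colLen.1 hc).trans_le (μ.colLen_anti 0 c.2 (Nat.zero_le _))

theorem snd_eq_zero_of_rowLen_zero_le_one {μ : YoungDiagram} (hμ : μ.rowLen 0 ≤ 1)
    {c : ℕ × ℕ} (hc : c ∈ μ.cells) : c.2 = 0 := by
  have := (mem_iff_lt_rowLen.1 hc).trans_le (μ.rowLen_anti 0 c.1 (Nat.zero_le _))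
  omega

end YoungDiagram

section Specht

variable {F : Type} [Field F] {n : ℕ} {μ : YoungDiagram} (T : Fin n ≃ ↥μ.cells)

theorem of_mul_rowSymmetrizer {τ : Perm (Fin n)}
    (hτ : ∀ i, ((T (τ i)) : ℕ × ℕ).1 = ((T i) : ℕ × ℕ).1) :
    of F _ τ * rowSymmetrizer F n μ T = rowSymmetrizer F n μ T := by
  simpa [rowSymmetrizer] using of_mul_sum_units_smul_of (F := F) (χ := 1)
    (s := univ.filter fun σ : Perm (Fin n) =>
      ∀ i, ((T (σ i)) : ℕ × ℕ).1 = ((T i) : ℕ × ℕ).1)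
    fun σ => by
      simpa using Perm.forall_apply_mul_left_iff (f := fun i => ((T i) : ℕ × ℕ).1) hτ σ

theorem rowSymmetrizer_mul_of {τ : Perm (Fin n)}
    (hτ : ∀ i, ((T (τ i)) : ℕ × ℕ).1 = ((T i) : ℕ × ℕ).1) :
    rowSymmetrizer F n μ T * of F _ τ = rowSymmetrizer F n μ T := by
  simpa [rowSymmetrizer] using sum_units_smul_of_mul_of (F := F) (χ := 1)
    (s := univ.filter fun σ : Perm (Fin n) =>
      ∀ i, ((T (σ i)) : ℕ × ℕ).1 = ((T i) : ℕ × ℕ).1)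
    fun σ => by
      simpa using Perm.forall_apply_mul_right_iff (f := fun i => ((T i) : ℕ × ℕ).1) hτ σ

theorem of_mul_colSymmetrizer {τ : Perm (Fin n)}
    (hτ : ∀ i, ((T (τ i)) : ℕ × ℕ).2 = ((T i) : ℕ × ℕ).2) :
    of F _ τ * colSymmetrizer F n μ T = ((Perm.sign τ : ℤ) : F) • colSymmetrizer F n μ T :=
  of_mul_sum_units_smul_of fun σ => by
    simpa using Perm.forall_apply_mul_left_iff (f := fun i => ((T i) : ℕ × ℕ).2) hτ σ

theorem coeff_rowSymmetrizer (g : Perm (Fin n)) :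
    (rowSymmetrizer F n μ T).coeff g
      = if ∀ i, ((T (g i)) : ℕ × ℕ).1 = ((T i) : ℕ × ℕ).1 then 1 else 0 := by
  simp [rowSymmetrizer, coeff_sum, Finsupp.single_apply]

theorem coeff_one_colSymmetrizer_mul_rowSymmetrizer :
    (colSymmetrizer F n μ T * rowSymmetrizer F n μ T).coeff 1 = 1 := by
  rw [colSymmetrizer, sum_mul, coeff_sum, Finsupp.finsetSum_apply, sum_eq_single_of_mem 1 (by simp)]
  · simp [coeff_rowSymmetrizer]
  intro σ hσ hσ1
  rw [smul_mul_assoc, coeff_smul, Finsupp.smul_apply, of_apply, coeff_single_mul_apply,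
    mul_one, coeff_rowSymmetrizer, if_neg, mul_zero, smul_zero]
  refine fun hrow => hσ1 (Perm.ext fun i => T.injective (Subtype.ext (Prod.ext ?_ ?_)))
  · simpa using (hrow (σ i)).symm
  · simpa using (mem_filter.1 hσ).2 i

theorem colSymmetrizer_mul_rowSymmetrizer_ne_zero :
    colSymmetrizer F n μ T * rowSymmetrizer F n μ T ≠ 0 := fun h => by
  simpa [h] using coeff_one_colSymmetrizer_mul_rowSymmetrizer (F := F) T

theorem card_filter_snd_eq_colLen (c : ℕ) :
    #(univ.filter fun i => ((T i) : ℕ × ℕ).2 = c) = μ.colLen c := by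
  rw [← card_range (μ.colLen c)]
  refine card_bij (fun i _ => ((T i) : ℕ × ℕ).1) (fun i hi => ?_) (fun i hi i' hi' h => ?_)
    fun r hr => ?_
  · rw [mem_filter] at hi
    rw [mem_range, ← YoungDiagram.mem_iff_lt_colLen, ← hi.2]
    exact (T i).2
  · rw [mem_filter] at hi hi'
    exact T.injective (Subtype.ext (Prod.ext h (hi.2.trans hi'.2.symm)))
  · have hmem : (r, c) ∈ μ.cells := YoungDiagram.mem_iff_lt_colLen.2 (mem_range.1 hr)
    exact ⟨T.symm ⟨(r, c), hmem⟩, by simp⟩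

theorem antisymmetrizer_mul_colSymmetrizer {X : Finset (Fin n)} {c : ℕ}
    (hX : ∀ i ∈ X, ((T i) : ℕ × ℕ).2 = c) :
    antisymmetrizer F X * colSymmetrizer F n μ T
      = ((#X).factorial : F) • colSymmetrizer F n μ T := by
  rw [antisymmetrizer, sum_mul,
    sum_congr rfl (g := fun _ => colSymmetrizer F n μ T) fun σ hσ => ?_, sum_const,
    card_filter_forall_notMem_apply_eq, Nat.cast_smul_eq_nsmul]
  replace hσ : ∀ i ∉ X, σ i = i := by simpa using hσ
  have hcol : ∀ i, ((T (σ i)) : ℕ × ℕ).2 = ((T i) : ℕ × ℕ).2 := fun i => by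
    by_cases hi : i ∈ X
    · rw [hX i hi, hX _ (Perm.apply_mem_of_forall_notMem_apply_eq hσ hi)]
    · rw [hσ i hi]
  rw [smul_mul_assoc, of_mul_colSymmetrizer T hcol, smul_smul, Int.cast_units_mul_self, one_smul]

theorem of_mul_colSymmetrizer_of_rowLen_zero_le_one (hμ : μ.rowLen 0 ≤ 1) (σ : Perm (Fin n)) :
    of F _ σ * colSymmetrizer F n μ T = ((Perm.sign σ : ℤ) : F) • colSymmetrizer F n μ T :=
  of_mul_colSymmetrizer T fun i => by
    rw [YoungDiagram.snd_eq_zero_of_rowLen_zero_le_one hμ (T (σ i)).2,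
      YoungDiagram.snd_eq_zero_of_rowLen_zero_le_one hμ (T i).2]

theorem exists_mul_rowSymmetrizer_of_mem_spechtModule {m : MonoidAlgebra F (Perm (Fin n))}
    (hm : m ∈ spechtModule F n μ T) : ∃ u, m = u * rowSymmetrizer F n μ T := by
  obtain ⟨w, rfl⟩ := Submodule.mem_span_singleton.1 hm
  exact ⟨w * colSymmetrizer F n μ T, by rw [smul_eq_mul, mul_assoc]⟩

/-- By pigeonhole `h⁻¹` sends some `x ≠ y` of `X` into one row, so the transposition
`t = (x y)` satisfies `t h a_T = h a_T`, while `z_X t = -z_X`. -/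
theorem antisymmetrizer_mul_of_mul_rowSymmetrizer (h2 : (2 : F) ≠ 0) {X : Finset (Fin n)}
    (hX : μ.colLen 0 < #X) (h : Perm (Fin n)) :
    antisymmetrizer F X * (of F _ h * rowSymmetrizer F n μ T) = 0 := by
  obtain ⟨x, hx, y, hy, hxy, hrow⟩ := exists_ne_map_eq_of_card_lt_of_maps_to
    (t := range (μ.colLen 0)) (f := fun i => ((T (h⁻¹ i)) : ℕ × ℕ).1) (by simpa using hX)
    fun i _ => mem_range.2 (μ.fst_lt_colLen_zero (T (h⁻¹ i)).2)
  have hconj : h⁻¹ * swap x y * h = swap (h⁻¹ x) (h⁻¹ y) := by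
    rw [swap_apply_apply, inv_inv]
  refine eq_zero_of_eq_neg h2 ?_
  calc antisymmetrizer F X * (of F _ h * rowSymmetrizer F n μ T)
      = antisymmetrizer F X *
          (of F _ h * (of F _ (h⁻¹ * swap x y * h) * rowSymmetrizer F n μ T)) := by
        rw [hconj, of_mul_rowSymmetrizer T
          (Perm.apply_swap_apply_eq (f := fun i => ((T i) : ℕ × ℕ).1) hrow)]
    _ = antisymmetrizer F X * of F _ (swap x y) * (of F _ h * rowSymmetrizer F n μ T) := by
        rw [← mul_assoc (of F _ h), ← map_mul, mul_assoc _ (of F _ (swap x y)),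
          ← mul_assoc (of F _ (swap x y)), ← map_mul, ← mul_assoc h, mul_inv_cancel_left]
    _ = -(antisymmetrizer F X * (of F _ h * rowSymmetrizer F n μ T)) := by
        rw [antisymmetrizer_mul_swap hx hy hxy, neg_mul]

theorem antisymmetrizer_mul_eq_zero_of_mem_spechtModule (h2 : (2 : F) ≠ 0)
    {X : Finset (Fin n)} (hX : μ.colLen 0 < #X) {m : MonoidAlgebra F (Perm (Fin n))}
    (hm : m ∈ spechtModule F n μ T) : antisymmetrizer F X * m = 0 := by
  obtain ⟨u, rfl⟩ := exists_mul_rowSymmetrizer_of_mem_spechtModule T hm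
  clear hm
  induction u using MonoidAlgebra.induction_linear with
  | zero => rw [zero_mul, mul_zero]
  | add u v hu hv => rw [add_mul, mul_add, hu, hv, add_zero]
  | single g r =>
    rw [← smul_of, smul_mul_assoc, mul_smul_comm,
      antisymmetrizer_mul_of_mul_rowSymmetrizer T h2 hX, smul_zero]

theorem eq_zero_of_mem_spechtModule_of_of_mul_eq_sign_smul (h2 : (2 : F) ≠ 0)
    (hμ : 1 < μ.rowLen 0) {m : MonoidAlgebra F (Perm (Fin n))} (hm : m ∈ spechtModule F n μ T)
    (hsign : ∀ σ, of F _ σ * m = ((Perm.sign σ : ℤ) : F) • m) : m = 0 := by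
  have h00 : (0, 0) ∈ μ.cells := YoungDiagram.mem_iff_lt_rowLen.2 (by omega)
  have h01 : (0, 1) ∈ μ.cells := YoungDiagram.mem_iff_lt_rowLen.2 hμ
  set x := T.symm ⟨(0, 0), h00⟩
  set y := T.symm ⟨(0, 1), h01⟩
  have hxy : x ≠ y := fun h => by simpa [x, y] using congrArg (fun i => ((T i) : ℕ × ℕ).2) h
  have hrow : ((T x) : ℕ × ℕ).1 = ((T y) : ℕ × ℕ).1 := by simp [x, y]
  obtain ⟨u, rfl⟩ := exists_mul_rowSymmetrizer_of_mem_spechtModule T hm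
  refine eq_zero_of_eq_neg h2 ?_
  calc u * rowSymmetrizer F n μ T
      = u * rowSymmetrizer F n μ T * of F _ (swap x y) := by
        rw [mul_assoc, rowSymmetrizer_mul_of T
          (Perm.apply_swap_apply_eq (f := fun i => ((T i) : ℕ × ℕ).1) hrow)]
    _ = -(u * rowSymmetrizer F n μ T) := by
        rw [mul_of_eq_units_smul hsign, Perm.sign_swap hxy]
        simp

end Specht

section NonIsomorphism
variable {F : Type} [Field F] {n : ℕ} {μ ν : YoungDiagram}

variable (F) in
noncomputable def spechtGenerator (T : Fin n ≃ ↥μ.cells) : spechtModule F n μ T :=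
  ⟨colSymmetrizer F n μ T * rowSymmetrizer F n μ T, Submodule.mem_span_singleton_self _⟩

theorem spechtGenerator_ne_zero (T : Fin n ≃ ↥μ.cells) : spechtGenerator F T ≠ 0 := fun h =>
  colSymmetrizer_mul_rowSymmetrizer_ne_zero T (congrArg Subtype.val h)

theorem spechtModule_not_nonempty_linearEquiv_of_rowLen (h2 : (2 : F) ≠ 0)
    (hμ : μ.rowLen 0 ≤ 1) (hν : 1 < ν.rowLen 0)
    (Tμ : Fin n ≃ ↥μ.cells) (Tν : Fin n ≃ ↥ν.cells) :
    ¬ Nonempty (spechtModule F n μ Tμ ≃ₗ[MonoidAlgebra F (Perm (Fin n))]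
      spechtModule F n ν Tν) := by
  rintro ⟨φ⟩
  set e := spechtGenerator F Tμ
  have hsign : ∀ σ, of F (Perm (Fin n)) σ • φ e = ((Perm.sign σ : ℤ) : F) • φ e := by
    intro σ
    rw [← algebraMap_smul (MonoidAlgebra F (Perm (Fin n))), ← map_smul, ← map_smul,
      algebraMap_smul]
    congr 1
    ext1
    simp only [e, spechtGenerator, Submodule.coe_smul, Submodule.coe_smul_of_tower, smul_eq_mul]
    rw [← mul_assoc, of_mul_colSymmetrizer_of_rowLen_zero_le_one Tμ hμ, smul_mul_assoc]
  refine spechtGenerator_ne_zero Tμ (φ.map_eq_zero_iff.1 (Subtype.ext ?_))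
  exact eq_zero_of_mem_spechtModule_of_of_mul_eq_sign_smul Tν h2 hν (φ e).2 fun σ => by
    simpa using congrArg Subtype.val (hsign σ)

theorem spechtModule_not_nonempty_linearEquiv_of_colLen (h2 : (2 : F) ≠ 0) {k c : ℕ}
    (hk : (k.factorial : F) ≠ 0) (hμ : k ≤ μ.colLen c) (hν : ν.colLen 0 < k)
    (Tμ : Fin n ≃ ↥μ.cells) (Tν : Fin n ≃ ↥ν.cells) :
    ¬ Nonempty (spechtModule F n μ Tμ ≃ₗ[MonoidAlgebra F (Perm (Fin n))]
      spechtModule F n ν Tν) := by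
  rintro ⟨φ⟩
  obtain ⟨X, hXcol, rfl⟩ := exists_subset_card_eq (n := k)
    (s := univ.filter fun i => ((Tμ i) : ℕ × ℕ).2 = c) (by rwa [card_filter_snd_eq_colLen])
  set e := spechtGenerator F Tμ
  have hz : antisymmetrizer F X • e = ((#X).factorial : F) • e := by
    ext1
    simp [e, spechtGenerator, ← mul_assoc,
      antisymmetrizer_mul_colSymmetrizer Tμ fun i hi => (mem_filter.1 (hXcol hi)).2]
  have hφe : ((#X).factorial : F) • φ e = 0 := by
    rw [← algebraMap_smul (MonoidAlgebra F (Perm (Fin n))), ← map_smul, algebraMap_smul, ← hz,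
      map_smul]
    exact Subtype.ext (antisymmetrizer_mul_eq_zero_of_mem_spechtModule Tν h2 hν (φ e).2)
  exact spechtGenerator_ne_zero Tμ (φ.map_eq_zero_iff.1 ((smul_eq_zero.1 hφe).resolve_left hk))

end NonIsomorphism

theorem natCast_factorial_ne_zero {R : Type*} [AddMonoidWithOne R] {p : ℕ} [CharP R p]
    (hp : p.Prime) {k : ℕ} (hk : k < p) : (k.factorial : R) ≠ 0 := by
  rw [Ne, CharP.cast_eq_zero_iff R p, hp.dvd_factorial]
  omega

section Hook
variable {n j : ℕ} (h : j < n)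

theorem hookDiagram_rowLens : (hookDiagram n j h).rowLens = (n - j) :: List.replicate j 1 :=
  YoungDiagram.rowLens_ofRowLens_eq_self fun x hx => by
    rcases List.mem_cons.1 hx with rfl | hx
    · omega
    · rw [List.eq_of_mem_replicate hx]
      exact Nat.one_pos

theorem hookDiagram_rowLen_zero : (hookDiagram n j h).rowLen 0 = n - j := by
  rw [← YoungDiagram.get_rowLens (h := by simp [hookDiagram_rowLens])]
  simp [hookDiagram_rowLens]

theorem hookDiagram_colLen_zero : (hookDiagram n j h).colLen 0 = j + 1 := by
  rw [← YoungDiagram.length_rowLens, hookDiagram_rowLens, List.length_cons, List.length_replicate]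

end Hook

/-- Let `p` be an odd prime and `F` (algebraically closed) of
characteristic `p`.  The Specht modules `S^{(p-j,1^j)}` for `F𝔖_p`, `j = 0, …, p-1`,
are pairwise non-isomorphic (for any choices of tableaux used to realize them). -/
theorem hook_specht_pairwise_nonisomorphic
    (p : ℕ) [hp : Fact p.Prime] (hodd : Odd p)
    (F : Type) [Field F] [CharP F p]
    (j l : ℕ) (hj : j ≤ p - 1) (hl : l ≤ p - 1) (hjl : j ≠ l)
    (Tj : Fin p ≃ ↥((hookDiagram p j (by have := hp.out.two_le; omega)).cells))
    (Tl : Fin p ≃ ↥((hookDiagram p l (by have := hp.out.two_le; omega)).cells)) :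
    ¬ Nonempty
      (↥(spechtModule F p (hookDiagram p j (by have := hp.out.two_le; omega)) Tj)
        ≃ₗ[MonoidAlgebra F (Equiv.Perm (Fin p))]
       ↥(spechtModule F p (hookDiagram p l (by have := hp.out.two_le; omega)) Tl)) := by
  have hp3 : 3 ≤ p := by
    have := hp.out.two_le
    have := Nat.odd_iff.1 hodd
    omega
  have h2 : (2 : F) ≠ 0 := by simpa using natCast_factorial_ne_zero (R := F) hp.out (k := 2) hp3
  wlog hlj : l < j generalizing j l
  · exact fun ⟨φ⟩ => this l j hl hj hjl.symm Tl Tj (by omega) ⟨φ.symm⟩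
  by_cases hjp : j = p - 1
  · exact spechtModule_not_nonempty_linearEquiv_of_rowLen h2
      (by rw [hookDiagram_rowLen_zero]; omega) (by rw [hookDiagram_rowLen_zero]; omega) Tj Tl
  · exact spechtModule_not_nonempty_linearEquiv_of_colLen h2 (k := l + 2) (c := 0)
      (natCast_factorial_ne_zero hp.out (by omega))
      (by rw [hookDiagram_colLen_zero]; omega) (by rw [hookDiagram_colLen_zero]; omega) Tj Tl
end

section
/- Let p be prime, k a positive integer, Δ = Δ_k(𝔖_p) ≤ 𝔖_{pk} the diagonal copy of 𝔖_p, C_p ≤ 𝔖_p of order p generated by a p-cycle π, and D = Δ_k(𝔖_p)·C_k^{[p]} where C_k ≤ 𝔖_k is generated by a k-cycle, with p ∤ k. If x ∈ 𝔖_{pk} and p divides |xDx⁻¹ ∩ Δ|, then there exists x₀ ∈ (∏_{r=1}^k C_p[r])·𝔖_k^{[p]} with Δ x₀ D = Δ x D. -/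
/-! We realize the symmetric group `𝔖_{pk}` as `Equiv.Perm (Fin k × Fin p)`, where the pair
`(r, i)` denotes the `i`-th entry of the `r`-th one of the `k` successive blocks of size
`p` in `{1, …, pk}`. -/

/-- `Δ_k : 𝔖_p →* 𝔖_{pk}`: the diagonal embedding, acting simultaneously on each of the
`k` blocks of size `p`. -/
def diagHom (k p : ℕ) : Equiv.Perm (Fin p) →* Equiv.Perm (Fin k × Fin p) where
  toFun σ := Equiv.prodCongrRight fun _ => σ
  map_one' := by
    ext x
    · rfl
    · rfl
  map_mul' σ τ := by
    ext x
    · rfl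
    · rfl

/-- `τ ↦ τ^{[p]} : 𝔖_k →* 𝔖_{pk}`: permuting the `k` blocks of size `p`. -/
def blockHom (k p : ℕ) : Equiv.Perm (Fin k) →* Equiv.Perm (Fin k × Fin p) where
  toFun τ := Equiv.prodCongrLeft fun _ => τ
  map_one' := by
    ext x
    · rfl
    · rfl
  map_mul' σ τ := by
    ext x
    · rfl
    · rfl

/-- `(σ_1, …, σ_k) ↦ ∏_{r=1}^k σ_r[r]`: each `σ_r` acts on the `r`-th block of size `p`. -/
def blockwiseHom (k p : ℕ) : (Fin k → Equiv.Perm (Fin p)) →* Equiv.Perm (Fin k × Fin p) where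
  toFun y := Equiv.prodCongrRight y
  map_one' := by
    ext x
    · rfl
    · rfl
  map_mul' y z := by
    ext x
    · rfl
    · rfl

/-- The subgroup `∏_{r=1}^k C_p[r]` of `𝔖_{pk}`, where `C_p = ⟨finRotate p⟩` is generated
by a `p`-cycle. -/
def bigCpSubgroup (k p : ℕ) : Subgroup (Equiv.Perm (Fin k × Fin p)) :=
  Subgroup.map (blockwiseHom k p)
    (Subgroup.pi Set.univ fun _ => Subgroup.zpowers (finRotate p))

/-- The diagonal subgroup `Δ_k(𝔖_p)`. -/
def diagSubgroup (k p : ℕ) : Subgroup (Equiv.Perm (Fin k × Fin p)) :=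
  (diagHom k p).range

/-- The diagonal subgroup `Δ_k(C_p)` of the cyclic group `C_p = ⟨finRotate p⟩`. -/
def diagCpSubgroup (k p : ℕ) : Subgroup (Equiv.Perm (Fin k × Fin p)) :=
  Subgroup.map (diagHom k p) (Subgroup.zpowers (finRotate p))

/-- The subgroup `𝔖_k^{[p]}` of block permutations. -/
def blockSubgroup (k p : ℕ) : Subgroup (Equiv.Perm (Fin k × Fin p)) :=
  (blockHom k p).range

/-- The subgroup `D = Δ_k(𝔖_p) · C_k^{[p]}`, where `C_k = ⟨finRotate k⟩ ≤ 𝔖_k` is generated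
by a `k`-cycle (`Δ_k(𝔖_p)` and `C_k^{[p]}` centralize each other, so `D` is their join). -/
def Dsubgroup (k p : ℕ) : Subgroup (Equiv.Perm (Fin k × Fin p)) :=
  diagSubgroup k p ⊔ Subgroup.map (blockHom k p) (Subgroup.zpowers (finRotate k))

/-! By Cauchy's theorem `xDx⁻¹ ∩ Δ` contains an element `Δ(σ) = x d x⁻¹` of order `p`. As
`D ≅ 𝔖_p × C_k`, an element of `D` whose `p`-th power is trivial has `C_k`-component of order
dividing `gcd(p, k) = 1`, so `d = Δ(τ)`. Both `σ` and `τ` are `p`-cycles, hence `σ = βπβ⁻¹` and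
`τ = γπγ⁻¹`, and `x₀ = Δ(β)⁻¹ x Δ(γ) ∈ Δ x D` centralizes `Δ(π)`. A permutation commuting with
`Δ(π)` maps each block onto a block by a rotation, so it lies in `(∏_r C_p[r]) · 𝔖_k^{[p]}`. -/

open Equiv

lemma diagHom_apply (k p : ℕ) (σ : Perm (Fin p)) (q : Fin k × Fin p) :
    diagHom k p σ q = (q.1, σ q.2) := rfl

lemma blockHom_apply (k p : ℕ) (τ : Perm (Fin k)) (q : Fin k × Fin p) :
    blockHom k p τ q = (τ q.1, q.2) := rfl

lemma blockwiseHom_apply (k p : ℕ) (y : Fin k → Perm (Fin p)) (q : Fin k × Fin p) :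
    blockwiseHom k p y q = (q.1, y q.1 q.2) := rfl

lemma diagHom_injective {k : ℕ} (p : ℕ) (hk : 0 < k) : Function.Injective (diagHom k p) :=
  fun σ τ h => Equiv.ext fun i => congrArg Prod.snd (DFunLike.congr_fun h (⟨0, hk⟩, i))

lemma commute_diagHom_blockHom (k p : ℕ) (σ : Perm (Fin p)) (τ : Perm (Fin k)) :
    Commute (diagHom k p σ) (blockHom k p τ) :=
  Equiv.ext fun _ => rfl

lemma mem_Dsubgroup_iff {k p : ℕ} {d : Perm (Fin k × Fin p)} :
    d ∈ Dsubgroup k p ↔ ∃ σ : Perm (Fin p), ∃ τ ∈ Subgroup.zpowers (finRotate k),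
      d = diagHom k p σ * blockHom k p τ := by
  let C := Subgroup.zpowers (finRotate k)
  let f := MonoidHom.noncommCoprod (diagHom k p) ((blockHom k p).comp C.subtype)
    fun σ τ => commute_diagHom_blockHom k p σ τ
  have hD : Dsubgroup k p = f.range :=
    Eq.symm <| (MonoidHom.noncommCoprod_range _ _ _).trans <| by
      rw [MonoidHom.range_comp, Subgroup.range_subtype]; rfl
  rw [hD]
  constructor
  · rintro ⟨⟨σ, τ⟩, rfl⟩
    exact ⟨σ, τ, τ.2, rfl⟩
  · rintro ⟨σ, τ, hτ, rfl⟩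
    exact ⟨(σ, ⟨τ, hτ⟩), rfl⟩

lemma eq_one_of_diagHom_mul_blockHom_eq_one {k p : ℕ} [NeZero p] {σ : Perm (Fin p)}
    {τ : Perm (Fin k)} (h : diagHom k p σ * blockHom k p τ = 1) : τ = 1 :=
  Equiv.ext fun r => congrArg Prod.fst (DFunLike.congr_fun h (r, 0))

lemma finRotate_pow_val_apply {n : ℕ} (i j : Fin n) : (finRotate n ^ (j : ℕ)) i = i + j := by
  rw [Perm.coe_pow, ← finCycle_eq_finRotate_iterate, finCycle_apply]

lemma finRotate_pow_self (n : ℕ) : finRotate n ^ n = 1 := by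
  cases n with
  | zero => rfl
  | succ n =>
    ext i
    have h := finRotate_pow_val_apply i (Fin.last n)
    rw [Fin.val_last] at h
    rw [pow_succ', Perm.mul_apply, h, finRotate_apply, add_assoc, Fin.last_add_one,
      add_zero, Perm.one_apply]

lemma mem_diagSubgroup_of_mem_Dsubgroup_of_pow_eq_one {k p : ℕ} [NeZero p] (hpk : p.Coprime k)
    {d : Perm (Fin k × Fin p)} (hd : d ∈ Dsubgroup k p) (hdp : d ^ p = 1) :
    d ∈ diagSubgroup k p := by
  obtain ⟨σ, τ, hτC, rfl⟩ := mem_Dsubgroup_iff.mp hd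
  have hτp : τ ^ p = 1 := by
    rw [(commute_diagHom_blockHom k p σ τ).mul_pow, ← map_pow, ← map_pow] at hdp
    exact eq_one_of_diagHom_mul_blockHom_eq_one hdp
  have hτk : τ ^ k = 1 := orderOf_dvd_iff_pow_eq_one.mp
    ((orderOf_dvd_of_mem_zpowers hτC).trans (orderOf_dvd_of_pow_eq_one (finRotate_pow_self k)))
  have hτ : τ = 1 := by
    simpa [hpk.gcd_eq_one] using pow_gcd_eq_one.mpr ⟨hτp, hτk⟩
  exact ⟨σ, by rw [hτ, map_one, mul_one]⟩

lemma isConj_finRotate_of_orderOf_eq {p : ℕ} (hp : p.Prime) {σ : Perm (Fin p)}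
    (h : orderOf σ = p) : IsConj (finRotate p) σ := by
  have hcard : Fintype.card (Fin p) = p := Fintype.card_fin p
  have hσ : σ.IsCycle :=
    Perm.isCycle_of_prime_order'' (by rwa [hcard]) (by rw [hcard, h])
  refine (isCycle_finRotate_of_le hp.two_le).isConj hσ ?_
  rw [support_finRotate_of_le hp.two_le, ← hσ.orderOf, h, Finset.card_univ, hcard]

lemma apply_eq_of_commute_diagHom_finRotate {k p : ℕ} [NeZero p] {x : Perm (Fin k × Fin p)}
    (hx : Commute x (diagHom k p (finRotate p))) (r : Fin k) (i : Fin p) :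
    x (r, i) = ((x (r, 0)).1, (x (r, 0)).2 + i) := by
  have h := DFunLike.congr_fun (hx.pow_right i).eq (r, 0)
  rwa [Perm.mul_apply, Perm.mul_apply, ← map_pow, diagHom_apply, diagHom_apply,
    finRotate_pow_val_apply, finRotate_pow_val_apply, zero_add] at h

lemma exists_mem_bigCpSubgroup_mul_mem_blockSubgroup {k p : ℕ} [NeZero p]
    {x : Perm (Fin k × Fin p)} (hx : Commute x (diagHom k p (finRotate p))) :
    ∃ y ∈ bigCpSubgroup k p, ∃ z ∈ blockSubgroup k p, x = y * z := by
  let b : Fin k → Fin k := fun r => (x (r, 0)).1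
  let c : Fin k → Fin p := fun r => (x (r, 0)).2
  have hxbc : ∀ r i, x (r, i) = (b r, c r + i) := apply_eq_of_commute_diagHom_finRotate hx
  have hb : Function.Injective b := by
    intro r r' h
    have : x (r, c r' - c r) = x (r', 0) := by rw [hxbc, hxbc, h, add_sub_cancel, add_zero]
    exact congrArg Prod.fst (x.injective this)
  let τ := Equiv.ofBijective b (Finite.injective_iff_bijective.mp hb)
  let y : Fin k → Perm (Fin p) := fun s => finRotate p ^ (c (τ.symm s) : ℕ)
  have hy : y ∈ Subgroup.pi Set.univ fun _ => Subgroup.zpowers (finRotate p) :=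
    fun s _ => Subgroup.npow_mem_zpowers _ _
  refine ⟨blockwiseHom k p y, ⟨y, hy, rfl⟩, blockHom k p τ, ⟨τ, rfl⟩, ?_⟩
  ext ⟨r, i⟩ : 1
  rw [hxbc, Perm.mul_apply, blockHom_apply, blockwiseHom_apply]
  simp [y, τ, finRotate_pow_val_apply, add_comm]

lemma commute_inv_mul_mul_of_conj {G : Type*} [Group G] {a b c x : G}
    (h : x * (b * c * b⁻¹) * x⁻¹ = a * c * a⁻¹) : Commute (a⁻¹ * x * b) c := by
  have hconj : (a⁻¹ * x * b) * c * (a⁻¹ * x * b)⁻¹ = c := calc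
    _ = a⁻¹ * (x * (b * c * b⁻¹) * x⁻¹) * a := by group
    _ = c := by rw [h]; group
  exact mul_inv_eq_iff_eq_mul.mp hconj

open scoped Pointwise in
/-- Let `p` be prime, `k` positive with `p ∤ k`, `Δ = Δ_k(𝔖_p)` and
`D = Δ_k(𝔖_p)·C_k^{[p]}`.  If `x ∈ 𝔖_{pk}` and `p` divides `|xDx⁻¹ ∩ Δ|`, then there is
`x₀ ∈ (∏_{r=1}^k C_p[r])·𝔖_k^{[p]}` with `Δ x₀ D = Δ x D`. -/
theorem double_coset_representative_in_centralizer
    (p k : ℕ) [hp : Fact p.Prime] (hk : 0 < k) (hpk : ¬ p ∣ k)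
    (x : Equiv.Perm (Fin k × Fin p))
    (hx : p ∣ Nat.card
      ↥(Subgroup.map (MulAut.conj x).toMonoidHom (Dsubgroup k p) ⊓ diagSubgroup k p)) :
    ∃ (x₀ : Equiv.Perm (Fin k × Fin p)),
      (∃ y ∈ bigCpSubgroup k p, ∃ z ∈ blockSubgroup k p, x₀ = y * z) ∧
      (diagSubgroup k p : Set (Equiv.Perm (Fin k × Fin p))) * {x₀} * (Dsubgroup k p) =
        (diagSubgroup k p : Set (Equiv.Perm (Fin k × Fin p))) * {x} * (Dsubgroup k p) := by
  obtain ⟨g, hg⟩ := exists_prime_orderOf_dvd_card' p hx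
  rw [← Subgroup.orderOf_coe] at hg
  obtain ⟨⟨d, hd, hdg⟩, σ, hσ⟩ := Subgroup.mem_inf.mp g.2
  have hdp : orderOf d = p := calc
    orderOf d = orderOf (g : Perm (Fin k × Fin p)) := by
      rw [← hdg]; exact (MulEquiv.orderOf_eq (MulAut.conj x) d).symm
    _ = p := hg
  obtain ⟨τ, rfl⟩ := mem_diagSubgroup_of_mem_Dsubgroup_of_pow_eq_one
    (hp.out.coprime_iff_not_dvd.mpr hpk) hd (orderOf_dvd_iff_pow_eq_one.mp hdp.dvd)
  have hconj : x * diagHom k p τ * x⁻¹ = diagHom k p σ := hdg.trans hσ.symm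
  rw [orderOf_injective _ (diagHom_injective p hk)] at hdp
  rw [← hσ, orderOf_injective _ (diagHom_injective p hk)] at hg
  obtain ⟨β, hβ⟩ := isConj_iff.mp (isConj_finRotate_of_orderOf_eq hp.out hg)
  obtain ⟨γ, hγ⟩ := isConj_iff.mp (isConj_finRotate_of_orderOf_eq hp.out hdp)
  have hcomm : Commute ((diagHom k p β)⁻¹ * x * diagHom k p γ) (diagHom k p (finRotate p)) := by
    refine commute_inv_mul_mul_of_conj ?_
    rwa [← map_inv, ← map_mul, ← map_mul, hγ, ← map_inv, ← map_mul, ← map_mul, hβ]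
  refine ⟨_, exists_mem_bigCpSubgroup_mul_mem_blockSubgroup hcomm,
    DoubleCoset.doubleCoset_eq_of_mem (DoubleCoset.mem_doubleCoset.mpr ⟨_, inv_mem ⟨β, rfl⟩, _,
      Subgroup.mem_sup_left ⟨γ, rfl⟩, rfl⟩)⟩
end

section
/- Let p be a prime, y = ∏_{r=1}^k y_r[r] ∈ ∏_{r=1}^k C_p[r] ≤ 𝔖_{pk} with y_i ≠ y_j for some i, j, and Δ = Δ_k(𝔖_p). Then yΔy⁻¹ ∩ Δ = Δ_k(C_p). (If instead all y_r are equal, i.e. y ∈ Δ_k(C_p), then yΔy⁻¹ ∩ Δ = Δ.) -/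
/-! Conjugating `Δ_k(σ)` by `y = ∏ y_r[r]` gives `∏ (y_r σ y_r⁻¹)[r]`, which lies in `Δ` exactly
when all the `y_r σ y_r⁻¹` agree. If `y_i ≠ y_j`, then `σ` commutes with `y_j⁻¹ y_i`, a
nontrivial element of `C_p`; as `p` is prime it generates `C_p`, so `σ` centralizes the `p`-cycle
and hence lies in `C_p`, where conjugation by the `y_r` is trivial. If all `y_r` agree, then
`y ∈ Δ` normalizes `Δ`. -/

open Equiv Subgroup

theorem Subgroup.zpowers_eq_zpowers_of_mem_of_prime {G : Type*} [Group G] {f c : G}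
    (hf : (orderOf f).Prime) (hc : c ∈ zpowers f) (hc1 : c ≠ 1) : zpowers c = zpowers f := by
  have : Finite (zpowers f) := Nat.finite_of_card_ne_zero (Nat.card_zpowers f ▸ hf.ne_zero)
  refine eq_of_le_of_card_ge (zpowers_le.2 hc) ?_
  rw [Nat.card_zpowers, Nat.card_zpowers]
  exact ((Nat.dvd_prime hf).1 (orderOf_dvd_of_mem_zpowers hc)).resolve_left
    (mt orderOf_eq_one_iff.1 hc1) |>.ge

theorem Equiv.Perm.IsCycle.mem_zpowers_of_commute {α : Type*} [Fintype α] [DecidableEq α]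
    {c σ : Perm α} (hc : c.IsCycle) (hsupp : c.support = Finset.univ) (h : Commute σ c) :
    σ ∈ zpowers c := by
  obtain ⟨_, hmem⟩ := hc.commute_iff.mp h
  rwa [Perm.ofSubtype_subtypePerm _ fun x _ => hsupp ▸ Finset.mem_univ x] at hmem

theorem mem_zpowers_finRotate_of_commute {p : ℕ} (hp : p.Prime) {c σ : Perm (Fin p)}
    (hc : c ∈ zpowers (finRotate p)) (hc1 : c ≠ 1) (h : Commute σ c) :
    σ ∈ zpowers (finRotate p) := by
  have hcyc := isCycle_finRotate_of_le hp.two_le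
  have hsupp := support_finRotate_of_le hp.two_le
  have hord : orderOf (finRotate p) = p := by
    rw [hcyc.orderOf, hsupp, Finset.card_univ, Fintype.card_fin]
  obtain ⟨j, hj⟩ : finRotate p ∈ zpowers c := by
    rw [zpowers_eq_zpowers_of_mem_of_prime (by rwa [hord]) hc hc1]
    exact mem_zpowers _
  exact hcyc.mem_zpowers_of_commute hsupp (hj ▸ h.zpow_right j)

section Blocks

variable {k p : ℕ}

theorem blockwiseHom_injective : Function.Injective (blockwiseHom k p) := by
  intro a b h
  funext r
  exact Equiv.ext fun x => (Prod.ext_iff.1 (Perm.congr_fun h (r, x))).2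

theorem diagHom_eq_blockwiseHom_const (σ : Perm (Fin p)) :
    diagHom k p σ = blockwiseHom k p fun _ => σ :=
  rfl

theorem conj_blockwiseHom_diagHom (y : Fin k → Perm (Fin p)) (σ : Perm (Fin p)) :
    MulAut.conj (blockwiseHom k p y) (diagHom k p σ) =
      blockwiseHom k p fun r => y r * σ * (y r)⁻¹ :=
  rfl

theorem diagHom_mem_map_conj_diagSubgroup_iff (y : Fin k → Perm (Fin p)) (τ : Perm (Fin p)) :
    diagHom k p τ ∈ (diagSubgroup k p).map (MulAut.conj (blockwiseHom k p y)).toMonoidHom ↔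
      ∃ σ, ∀ r, y r * σ * (y r)⁻¹ = τ := by
  simp only [diagSubgroup, mem_map, MonoidHom.mem_range, exists_exists_eq_and,
    MulEquiv.coe_toMonoidHom, conj_blockwiseHom_diagHom]
  simp only [diagHom_eq_blockwiseHom_const, blockwiseHom_injective.eq_iff, funext_iff]

theorem map_conj_diagSubgroup_inf_diagSubgroup_of_ne (hp : p.Prime)
    {y : Fin k → Perm (Fin p)} (hy : ∀ r, y r ∈ zpowers (finRotate p)) {i j : Fin k}
    (hij : y i ≠ y j) :
    (diagSubgroup k p).map (MulAut.conj (blockwiseHom k p y)).toMonoidHom ⊓ diagSubgroup k p =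
      diagCpSubgroup k p := by
  have conj_eq_self : ∀ r, ∀ σ ∈ zpowers (finRotate p), y r * σ * (y r)⁻¹ = σ := by
    rintro r σ ⟨n, rfl⟩
    obtain ⟨m, hm⟩ := hy r
    rw [← hm, (Commute.zpow_zpow_self _ m n).eq, mul_inv_cancel_right]
  apply le_antisymm
  · rintro - ⟨hconj, τ, rfl⟩
    obtain ⟨σ, hσ⟩ := (diagHom_mem_map_conj_diagSubgroup_iff y τ).1 hconj
    have hcomm : Commute σ ((y j)⁻¹ * y i) :=
      calc σ * ((y j)⁻¹ * y i) = (y j)⁻¹ * (y j * σ * (y j)⁻¹) * y i := by group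
        _ = (y j)⁻¹ * (y i * σ * (y i)⁻¹) * y i := by rw [hσ i, hσ j]
        _ = (y j)⁻¹ * y i * σ := by group
    have hσC : σ ∈ zpowers (finRotate p) :=
      mem_zpowers_finRotate_of_commute hp (mul_mem (inv_mem (hy j)) (hy i))
        (fun h => hij (inv_mul_eq_one.1 h).symm) hcomm
    exact ⟨σ, hσC, by rw [← hσ i, conj_eq_self i σ hσC]⟩
  · rintro - ⟨σ, hσ, rfl⟩
    exact ⟨(diagHom_mem_map_conj_diagSubgroup_iff y σ).2 ⟨σ, fun r => conj_eq_self r σ hσ⟩,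
      σ, rfl⟩

theorem map_conj_diagSubgroup_of_forall_eq (hk : 0 < k) {y : Fin k → Perm (Fin p)}
    (hy : ∀ i j, y i = y j) :
    (diagSubgroup k p).map (MulAut.conj (blockwiseHom k p y)).toMonoidHom = diagSubgroup k p := by
  have hy_mem : blockwiseHom k p y ∈ diagSubgroup k p :=
    ⟨y ⟨0, hk⟩, by rw [diagHom_eq_blockwiseHom_const]; congr 1; funext r; exact hy _ _⟩
  exact conj_smul_eq_self_of_mem hy_mem

end Blocks

/-- Let `p` be prime and `y = ∏_{r=1}^k y_r[r]` with each `y_r ∈ C_p`.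
If `y_i ≠ y_j` for some `i, j`, then `yΔy⁻¹ ∩ Δ = Δ_k(C_p)`; if instead all `y_r` are
equal (i.e. `y ∈ Δ_k(C_p)`), then `yΔy⁻¹ ∩ Δ = Δ`. -/
theorem conjugate_diagonal_intersection_cases
    (p k : ℕ) [hp : Fact p.Prime] (hk : 0 < k)
    (yr : Fin k → Equiv.Perm (Fin p)) (hyr : ∀ r, yr r ∈ Subgroup.zpowers (finRotate p)) :
    ((∃ i j, yr i ≠ yr j) →
      Subgroup.map (MulAut.conj (blockwiseHom k p yr)).toMonoidHom (diagSubgroup k p) ⊓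
          diagSubgroup k p = diagCpSubgroup k p) ∧
    ((∀ i j, yr i = yr j) →
      Subgroup.map (MulAut.conj (blockwiseHom k p yr)).toMonoidHom (diagSubgroup k p) ⊓
          diagSubgroup k p = diagSubgroup k p) :=
  ⟨fun ⟨_, _, hij⟩ => map_conj_diagSubgroup_inf_diagSubgroup_of_ne hp.out hyr hij,
    fun hall => by rw [map_conj_diagSubgroup_of_forall_eq hk hall, inf_idem]⟩
end
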